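/- arXiv:1603.06775 — 3 statements merged into one kernel-verified Lean document; each statement's English description precedes it below -/
import Mathlib

section
/- Let A: ℝ^d × ℝ^d → ℝ^{d×d} be defined by A(x,y) = a(x,x) - a(x,y) - a(y,x) + a(y,y), where a(x,y) is the cross quadratic variation density of a Gaussian martingale field, so that for any v ∈ ℝ^d, (x,y) ↦ ⟨A(x,y)v, v⟩ is the quadratic-variation density of the martingale t ↦ ⟨v, M(t,x) − M(t,y)⟩ and is hence symmetric and positive semidefinite. Then for x ≠ y in ℝ^d, points x_i = x + γ_i(y−x) with 0 = γ_0 < γ_1 < ... < γ_n = 1, one has ‖A(x,y)‖/|x−y| ≤ Σ_{i=1}^n ‖A(x_{i−1},x_i)‖/|x_{i−1}−x_i| and tr A(x,y)/|x−y| ≤ Σ_{i=1}^n tr A(x_{i−1},x_i)/|x_{i−1}−x_i|. -/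
open scoped RealInnerProductSpace BigOperators
open Matrix

/-- Operator norm of a real `d × d` matrix, acting on Euclidean space. -/
noncomputable def matOpNorm {d : ℕ} (A : Matrix (Fin d) (Fin d) ℝ) : ℝ :=
  ‖Matrix.toEuclideanCLM (𝕜 := ℝ) A‖

/-- The second-difference kernel `A(x,y) = a(x,x) - a(x,y) - a(y,x) + a(y,y)`. -/
noncomputable def secondDiff {d : ℕ}
    (a : EuclideanSpace ℝ (Fin d) → EuclideanSpace ℝ (Fin d) → Matrix (Fin d) (Fin d) ℝ)
    (x y : EuclideanSpace ℝ (Fin d)) : Matrix (Fin d) (Fin d) ℝ :=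
  a x x - a x y - a y x + a y y

/-!
For a fixed vector `v`, `(z, w) ↦ ⟪a(z, w) v, v⟫` is a positive semidefinite scalar kernel, so on
the partition points `xᵢ` it is a Gram matrix `⟪f xᵢ, f xⱼ⟫`, and then
`⟪A(xᵢ, xⱼ) v, v⟫ = ‖f xᵢ - f xⱼ‖²`. The triangle inequality along `x₀, …, xₙ` followed by
Cauchy–Schwarz with the weights `γᵢ - γᵢ₋₁`, which sum to `1`, gives
`⟪A(x, y) v, v⟫ ≤ ∑ ⟪A(xᵢ₋₁, xᵢ) v, v⟫ / (γᵢ - γᵢ₋₁)`. Summing over a basis bounds the trace;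
since `A(x, y)` is symmetric and positive semidefinite, its norm is the supremum of
`⟪A(x, y) v, v⟫` over unit vectors. Finally `|xᵢ₋₁ - xᵢ| = (γᵢ - γᵢ₋₁) |x - y|`.
-/

open scoped ComplexOrder

theorem Fin.sum_succ_sub_castSucc {M : Type*} [AddCommGroup M] : ∀ {n : ℕ} (f : Fin (n + 1) → M),
    ∑ i : Fin n, (f i.succ - f i.castSucc) = f (Fin.last n) - f 0
  | 0, f => by simp
  | n + 1, f => by
    have ih := Fin.sum_succ_sub_castSucc (fun i : Fin (n + 1) => f i.castSucc)
    rw [Fin.sum_univ_castSucc]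
    simp only [Fin.succ_castSucc, Fin.castSucc_zero] at ih ⊢
    rw [ih, Fin.succ_last]
    abel

section Chain

variable {α : Type*} [PseudoMetricSpace α]

theorem dist_le_sum_dist_fin : ∀ {n : ℕ} (f : Fin (n + 1) → α),
    dist (f 0) (f (Fin.last n)) ≤ ∑ i : Fin n, dist (f i.castSucc) (f i.succ)
  | 0, f => by simp
  | n + 1, f => by
    have ih := dist_le_sum_dist_fin (fun i : Fin (n + 1) => f i.castSucc)
    rw [Fin.sum_univ_castSucc]
    simp only [Fin.succ_castSucc, Fin.succ_last, Fin.castSucc_zero] at ih ⊢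
    exact (dist_triangle _ _ _).trans (add_le_add_left ih _)

theorem dist_sq_le_sum_dist_sq_div {n : ℕ} (f : Fin (n + 1) → α) {w : Fin n → ℝ}
    (hw : ∀ i, 0 < w i) (hw_sum : ∑ i, w i = 1) :
    dist (f 0) (f (Fin.last n)) ^ 2 ≤ ∑ i, dist (f i.castSucc) (f i.succ) ^ 2 / w i :=
  calc dist (f 0) (f (Fin.last n)) ^ 2
      ≤ (∑ i : Fin n, dist (f i.castSucc) (f i.succ)) ^ 2 / ∑ i, w i := by
        rw [hw_sum, div_one]
        exact pow_le_pow_left₀ dist_nonneg (dist_le_sum_dist_fin f) 2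
    _ ≤ _ := Finset.sq_sum_div_le_sum_sq_div _ _ fun i _ => hw i

end Chain

namespace Matrix

variable {ι : Type*}

-- `E (X j - X k) ^ 2` for a centred process `X` with covariance `G`.
def variogram (G : Matrix ι ι ℝ) (j k : ι) : ℝ := G j j - G j k - G k j + G k k

theorem variogram_gram {F : Type*} [NormedAddCommGroup F] [InnerProductSpace ℝ F] (f : ι → F)
    (j k : ι) : variogram (gram ℝ f) j k = ‖f j - f k‖ ^ 2 := by
  simp only [variogram, gram_apply, real_inner_self_eq_norm_sq, norm_sub_sq_real,
    real_inner_comm (f k) (f j)]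
  ring

theorem PosSemidef.exists_eq_gram {𝕜 : Type*} [RCLike 𝕜] [Finite ι] {M : Matrix ι ι 𝕜}
    (hM : M.PosSemidef) : ∃ (m : ℕ) (f : ι → EuclideanSpace 𝕜 (Fin m)), M = gram 𝕜 f := by
  obtain ⟨m, v, rfl⟩ := posSemidef_iff_eq_sum_vecMulVec.mp hM
  refine ⟨m, fun j => WithLp.toLp 2 fun i => star (v i j), ?_⟩
  ext j k
  simp [gram_apply, vecMulVec_apply, Matrix.sum_apply, PiLp.inner_apply, mul_comm]

theorem PosSemidef.variogram_nonneg [Finite ι] {G : Matrix ι ι ℝ} (hG : G.PosSemidef) (j k : ι) :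
    0 ≤ G.variogram j k := by
  obtain ⟨m, f, rfl⟩ := hG.exists_eq_gram
  rw [variogram_gram]
  positivity

theorem PosSemidef.variogram_le_sum_div {n : ℕ} {G : Matrix (Fin (n + 1)) (Fin (n + 1)) ℝ}
    (hG : G.PosSemidef) {w : Fin n → ℝ} (hw : ∀ i, 0 < w i) (hw_sum : ∑ i, w i = 1) :
    G.variogram 0 (Fin.last n) ≤ ∑ i, G.variogram i.castSucc i.succ / w i := by
  obtain ⟨m, f, rfl⟩ := hG.exists_eq_gram
  simpa only [variogram_gram, dist_eq_norm] using dist_sq_le_sum_dist_sq_div f hw hw_sum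

section EuclideanLin

variable {n : Type*} [Fintype n] [DecidableEq n]

theorem inner_toEuclideanLin_transpose (M : Matrix n n ℝ) (u w : EuclideanSpace ℝ n) :
    ⟪toEuclideanLin Mᵀ u, w⟫ = ⟪u, toEuclideanLin M w⟫ := by
  rw [← conjTranspose_eq_transpose_of_trivial, toEuclideanLin_conjTranspose_eq_adjoint,
    LinearMap.adjoint_inner_left]

theorem trace_eq_sum_inner_single (M : Matrix n n ℝ) :
    trace M = ∑ j, ⟪toEuclideanLin M (EuclideanSpace.single j 1), EuclideanSpace.single j 1⟫ := by
  simp [trace, EuclideanSpace.inner_single_right]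

theorem trace_le_sum_div_of_inner_le {κ : Type*} {M : Matrix n n ℝ} {N : κ → Matrix n n ℝ}
    {s : Finset κ} {w : κ → ℝ}
    (h : ∀ v, ⟪toEuclideanLin M v, v⟫ ≤ ∑ i ∈ s, ⟪toEuclideanLin (N i) v, v⟫ / w i) :
    trace M ≤ ∑ i ∈ s, trace (N i) / w i := by
  simp_rw [trace_eq_sum_inner_single, Finset.sum_div]
  rw [Finset.sum_comm]
  exact Finset.sum_le_sum fun j _ => h _

end EuclideanLin

end Matrix

section OpNorm

variable {d : ℕ}

theorem abs_inner_le_matOpNorm_mul_sq (M : Matrix (Fin d) (Fin d) ℝ)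
    (v : EuclideanSpace ℝ (Fin d)) : |⟪toEuclideanLin M v, v⟫| ≤ matOpNorm M * ‖v‖ ^ 2 :=
  calc |⟪toEuclideanLin M v, v⟫| ≤ ‖toEuclideanCLM (𝕜 := ℝ) M v‖ * ‖v‖ :=
        abs_real_inner_le_norm _ _
    _ ≤ matOpNorm M * ‖v‖ * ‖v‖ := by gcongr; exact ContinuousLinearMap.le_opNorm _ _
    _ = matOpNorm M * ‖v‖ ^ 2 := by ring

theorem matOpNorm_le_of_abs_inner_le {M : Matrix (Fin d) (Fin d) ℝ} (hM : M.IsHermitian)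
    {C : ℝ} (hC : 0 ≤ C) (h : ∀ v, |⟪toEuclideanLin M v, v⟫| ≤ C * ‖v‖ ^ 2) :
    matOpNorm M ≤ C := by
  rw [matOpNorm, ContinuousLinearMap.norm_eq_iSup_rayleighQuotient _ (by
    rw [coe_toEuclideanCLM_eq_toEuclideanLin]; exact isSymmetric_toEuclideanLin_iff.mpr hM)]
  refine ciSup_le fun v => ?_
  rcases eq_or_ne v 0 with rfl | hv
  · simpa using hC
  rw [ContinuousLinearMap.rayleighQuotient, ContinuousLinearMap.reApplyInnerSelf_apply, abs_div,
    abs_of_pos (by positivity : 0 < ‖v‖ ^ 2), div_le_iff₀ (by positivity)]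
  simpa [real_inner_comm, ← coe_toEuclideanCLM_eq_toEuclideanLin] using h v

theorem matOpNorm_le_sum_div_of_inner_le {κ : Type*} {M : Matrix (Fin d) (Fin d) ℝ}
    {N : κ → Matrix (Fin d) (Fin d) ℝ} {s : Finset κ} {w : κ → ℝ} (hM : M.IsHermitian)
    (hw : ∀ i ∈ s, 0 < w i) (hM_nonneg : ∀ v, 0 ≤ ⟪toEuclideanLin M v, v⟫)
    (h : ∀ v, ⟪toEuclideanLin M v, v⟫ ≤ ∑ i ∈ s, ⟪toEuclideanLin (N i) v, v⟫ / w i) :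
    matOpNorm M ≤ ∑ i ∈ s, matOpNorm (N i) / w i := by
  refine matOpNorm_le_of_abs_inner_le hM
    (Finset.sum_nonneg fun i hi => div_nonneg (norm_nonneg _) (hw i hi).le) fun v => ?_
  rw [abs_of_nonneg (hM_nonneg v), Finset.sum_mul]
  refine (h v).trans (Finset.sum_le_sum fun i hi => ?_)
  rw [div_mul_eq_mul_div]
  gcongr
  · exact (hw i hi).le
  · exact (le_abs_self _).trans (abs_inner_le_matOpNorm_mul_sq _ _)

end OpNorm

section Kernel

variable {d : ℕ}

def IsPosSemidefKernel {X : Type*} (a : X → X → Matrix (Fin d) (Fin d) ℝ) : Prop :=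
  ∀ (m : ℕ) (z : Fin m → X) (v : Fin m → EuclideanSpace ℝ (Fin d)),
    0 ≤ ∑ j : Fin m, ∑ k : Fin m, ⟪toEuclideanLin (a (z j) (z k)) (v k), v j⟫

theorem IsPosSemidefKernel.posSemidef_inner {X : Type*} {a : X → X → Matrix (Fin d) (Fin d) ℝ}
    (ha : IsPosSemidefKernel a) (ha_symm : ∀ x y, (a x y)ᵀ = a y x) {m : ℕ} (z : Fin m → X)
    (v : EuclideanSpace ℝ (Fin d)) :
    (Matrix.of fun j k => ⟪toEuclideanLin (a (z j) (z k)) v, v⟫).PosSemidef := by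
  refine .of_dotProduct_mulVec_nonneg ?_ fun c => ?_
  · ext j k
    rw [conjTranspose_apply, of_apply, of_apply, star_trivial, ← ha_symm,
      inner_toEuclideanLin_transpose, real_inner_comm]
  · refine (ha m z fun k => c k • v).trans_eq ?_
    simp only [dotProduct, mulVec, star_trivial, of_apply, map_smul, real_inner_smul_left,
      real_inner_smul_right, Finset.mul_sum]
    exact Finset.sum_congr rfl fun j _ => Finset.sum_congr rfl fun k _ => by ring

variable {a : EuclideanSpace ℝ (Fin d) → EuclideanSpace ℝ (Fin d) → Matrix (Fin d) (Fin d) ℝ}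

theorem secondDiff_isHermitian (ha_symm : ∀ x y, (a x y)ᵀ = a y x)
    (x y : EuclideanSpace ℝ (Fin d)) : (secondDiff a x y).IsHermitian := by
  simp only [IsHermitian, conjTranspose_eq_transpose_of_trivial, secondDiff, transpose_add,
    transpose_sub, ha_symm]
  abel

theorem inner_secondDiff_eq_variogram {ι : Type*} (z : ι → EuclideanSpace ℝ (Fin d))
    (v : EuclideanSpace ℝ (Fin d)) (j k : ι) :
    ⟪toEuclideanLin (secondDiff a (z j) (z k)) v, v⟫ =
      (Matrix.of fun j k => ⟪toEuclideanLin (a (z j) (z k)) v, v⟫).variogram j k := by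
  simp [secondDiff, variogram, inner_sub_left, inner_add_left]

theorem IsPosSemidefKernel.inner_secondDiff_nonneg (ha : IsPosSemidefKernel a)
    (ha_symm : ∀ x y, (a x y)ᵀ = a y x) (x y v : EuclideanSpace ℝ (Fin d)) :
    0 ≤ ⟪toEuclideanLin (secondDiff a x y) v, v⟫ := by
  simpa [← inner_secondDiff_eq_variogram] using
    (ha.posSemidef_inner ha_symm ![x, y] v).variogram_nonneg 0 1

theorem IsPosSemidefKernel.inner_secondDiff_le_sum_div (ha : IsPosSemidefKernel a)
    (ha_symm : ∀ x y, (a x y)ᵀ = a y x) {n : ℕ} (z : Fin (n + 1) → EuclideanSpace ℝ (Fin d))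
    {w : Fin n → ℝ} (hw : ∀ i, 0 < w i) (hw_sum : ∑ i, w i = 1) (v : EuclideanSpace ℝ (Fin d)) :
    ⟪toEuclideanLin (secondDiff a (z 0) (z (Fin.last n))) v, v⟫ ≤
      ∑ i, ⟪toEuclideanLin (secondDiff a (z i.castSucc) (z i.succ)) v, v⟫ / w i := by
  simpa only [inner_secondDiff_eq_variogram] using
    (ha.posSemidef_inner ha_symm z v).variogram_le_sum_div hw hw_sum

end Kernel

theorem norm_add_smul_sub_add_smul {E : Type*} [SeminormedAddCommGroup E] [NormedSpace ℝ E]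
    (x y : E) (s t : ℝ) : ‖(x + s • (y - x)) - (x + t • (y - x))‖ = |t - s| * ‖x - y‖ := by
  rw [add_sub_add_left_eq_sub, ← sub_smul, norm_smul, Real.norm_eq_abs, abs_sub_comm, norm_sub_rev]

theorem div_le_sum_div_mul_of_le_sum_div {κ : Type*} {s : Finset κ} {t c : ℝ} {u w : κ → ℝ}
    (hc : 0 ≤ c) (h : t ≤ ∑ i ∈ s, u i / w i) : t / c ≤ ∑ i ∈ s, u i / (w i * c) := by
  simp_rw [← div_div, ← Finset.sum_div]
  exact div_le_div_of_nonneg_right h hc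

theorem segment_subadditivity_of_psd_kernel_general {d : ℕ}
    (a : EuclideanSpace ℝ (Fin d) → EuclideanSpace ℝ (Fin d) → Matrix (Fin d) (Fin d) ℝ)
    (ha_symm : ∀ x y, (a x y)ᵀ = a y x)
    (ha_psd : ∀ (m : ℕ) (z : Fin m → EuclideanSpace ℝ (Fin d))
      (v : Fin m → EuclideanSpace ℝ (Fin d)),
      0 ≤ ∑ j : Fin m, ∑ k : Fin m, ⟪Matrix.toEuclideanLin (a (z j) (z k)) (v k), v j⟫)
    (x y : EuclideanSpace ℝ (Fin d))
    (n : ℕ) (γ : Fin (n + 1) → ℝ)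
    (hγmono : StrictMono γ) (hγ0 : γ 0 = 0) (hγn : γ (Fin.last n) = 1) :
    (matOpNorm (secondDiff a x y) / ‖x - y‖ ≤
      ∑ i : Fin n, matOpNorm (secondDiff a (x + γ i.castSucc • (y - x))
          (x + γ i.succ • (y - x))) /
        ‖(x + γ i.castSucc • (y - x)) - (x + γ i.succ • (y - x))‖) ∧
    (Matrix.trace (secondDiff a x y) / ‖x - y‖ ≤
      ∑ i : Fin n, Matrix.trace (secondDiff a (x + γ i.castSucc • (y - x))
          (x + γ i.succ • (y - x))) /
        ‖(x + γ i.castSucc • (y - x)) - (x + γ i.succ • (y - x))‖) := by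
  have hγ_step (i : Fin n) : 0 < γ i.succ - γ i.castSucc := sub_pos.mpr (hγmono i.castSucc_lt_succ)
  have hγ_sum : ∑ i : Fin n, (γ i.succ - γ i.castSucc) = 1 := by
    rw [Fin.sum_succ_sub_castSucc, hγn, hγ0, sub_zero]
  have hquad := IsPosSemidefKernel.inner_secondDiff_le_sum_div ha_psd ha_symm
    (fun j => x + γ j • (y - x)) hγ_step hγ_sum
  simp only [hγ0, hγn, zero_smul, one_smul, add_zero, add_sub_cancel] at hquad
  have hdist (i : Fin n) : ‖(x + γ i.castSucc • (y - x)) - (x + γ i.succ • (y - x))‖ =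
      (γ i.succ - γ i.castSucc) * ‖x - y‖ := by
    rw [norm_add_smul_sub_add_smul, abs_of_pos (hγ_step i)]
  simp only [hdist]
  exact ⟨div_le_sum_div_mul_of_le_sum_div (norm_nonneg _)
      (matOpNorm_le_sum_div_of_inner_le (secondDiff_isHermitian ha_symm x y) (fun i _ => hγ_step i)
        (IsPosSemidefKernel.inner_secondDiff_nonneg ha_psd ha_symm x y) hquad),
    div_le_sum_div_mul_of_le_sum_div (norm_nonneg _) (trace_le_sum_div_of_inner_le hquad)⟩

/-- subadditivity of `‖A(x,y)‖/|x-y|` and `tr A(x,y)/|x-y|` along partitions of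
the segment from `x` to `y`, for the second-difference kernel of a symmetric positive
semidefinite (Gaussian martingale field) covariance kernel `a`. -/
theorem segment_subadditivity_of_psd_kernel {d : ℕ}
    (a : EuclideanSpace ℝ (Fin d) → EuclideanSpace ℝ (Fin d) → Matrix (Fin d) (Fin d) ℝ)
    (ha_cont : Continuous fun p : EuclideanSpace ℝ (Fin d) × EuclideanSpace ℝ (Fin d) =>
      a p.1 p.2)
    (ha_symm : ∀ x y, (a x y)ᵀ = a y x)
    (ha_psd : ∀ (m : ℕ) (z : Fin m → EuclideanSpace ℝ (Fin d))
      (v : Fin m → EuclideanSpace ℝ (Fin d)),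
      0 ≤ ∑ j : Fin m, ∑ k : Fin m, ⟪Matrix.toEuclideanLin (a (z j) (z k)) (v k), v j⟫)
    (x y : EuclideanSpace ℝ (Fin d)) (hxy : x ≠ y)
    (n : ℕ) (hn : 1 ≤ n) (γ : Fin (n + 1) → ℝ)
    (hγmono : StrictMono γ) (hγ0 : γ 0 = 0) (hγn : γ (Fin.last n) = 1) :
    (matOpNorm (secondDiff a x y) / ‖x - y‖ ≤
      ∑ i : Fin n, matOpNorm (secondDiff a (x + γ i.castSucc • (y - x))
          (x + γ i.succ • (y - x))) /
        ‖(x + γ i.castSucc • (y - x)) - (x + γ i.succ • (y - x))‖) ∧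
    (Matrix.trace (secondDiff a x y) / ‖x - y‖ ≤
      ∑ i : Fin n, Matrix.trace (secondDiff a (x + γ i.castSucc • (y - x))
          (x + γ i.succ • (y - x))) /
        ‖(x + γ i.castSucc • (y - x)) - (x + γ i.succ • (y - x))‖) :=
  segment_subadditivity_of_psd_kernel_general a ha_symm ha_psd x y n γ hγmono hγ0 hγn
end

section
/- Suppose b: ℝ^d → ℝ^d and the matrix field A(x,y) (positive semidefinite, with the subadditivity property along line segments: for any partition x_i = x + γ_i(y−x), tr A(x,y)/|x−y| ≤ Σ tr A(x_{i−1},x_i)/|x_{i−1}−x_i| and ‖A(x,y)‖/|x−y| ≤ Σ ‖A(x_{i−1},x_i)‖/|x_{i−1}−x_i|) satisfy the local one-sided bound: for every z ∈ ℝ^d there is a neighborhood U of z and C ≥ 0 such that 2⟨b(y)−b(x), y−x⟩ + tr A(x,y) + μ‖A(x,y)‖ ≤ C|y−x|² for all x,y ∈ U. If moreover this holds with a single constant C on compact sets (i.e. the constants C can be taken uniform along each line segment by compactness), then the same inequality 2⟨b(y)−b(x), y−x⟩ + tr A(x,y) + μ‖A(x,y)‖ ≤ C|y−x|² holds globally for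 all x, y ∈ ℝ^d with the same constant C. -/
/-!
Cut the segment `[x, y]` into `n` equal pieces. The pairing `⟪b y - b x, y - x⟫` telescopes
exactly into `n` times the sum of the pairings over the pieces, while `tr A` and `‖A‖` are
bounded by `n` times their sums by assumption. A Lebesgue number of the cover of the compact
segment by the neighbourhoods where the local bound holds makes every piece short enough for it,
and `n · n · C (|y - x| / n)² = C |y - x|²`.
-/

open scoped RealInnerProductSpace BigOperators
open Matrix Metric

theorem IsCompact.exists_pos_forall_dist_lt {X : Type*} [PseudoMetricSpace X] {S : Set X}
    (hS : IsCompact S) {P : X → X → Prop}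
    (hloc : ∀ z, ∃ ε > 0, ∀ x y, dist x z < ε → dist y z < ε → P x y) :
    ∃ δ > 0, ∀ p ∈ S, ∀ q, dist q p < δ → P p q := by
  choose ε hε hP using hloc
  have hcover : S ⊆ ⋃ z, ball z (ε z) := fun p _ => Set.mem_iUnion.2 ⟨p, mem_ball_self (hε p)⟩
  obtain ⟨δ, hδ, hsub⟩ := lebesgue_number_lemma_of_metric hS (fun z => isOpen_ball) hcover
  refine ⟨δ, hδ, fun p hp q hq => ?_⟩
  obtain ⟨z, hz⟩ := hsub p hp
  exact hP z p q (hz (mem_ball_self hδ)) (hz hq)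

section Partition

variable {E : Type*} [AddCommGroup E] [Module ℝ E]

theorem add_div_smul_mem_segment (x y : E) {i n : ℕ} (hi : i ≤ n) :
    x + ((i : ℝ) / n) • (y - x) ∈ segment ℝ x y := by
  rw [segment_eq_image']
  exact ⟨(i : ℝ) / n, ⟨by positivity, div_le_one_of_le₀ (by exact_mod_cast hi) n.cast_nonneg⟩, rfl⟩

theorem add_succ_div_smul_sub_add_div_smul (x v : E) (t s : ℝ) :
    (x + ((t + 1) / s) • v) - (x + (t / s) • v) = s⁻¹ • v := by
  rw [add_sub_add_left_eq_sub, ← sub_smul]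
  congr 1
  ring

/-- The paper's `F x y / |y - x| ≤ ∑ F xᵢ xᵢ₊₁ / |xᵢ₊₁ - xᵢ|` for the equidistant partition of
`[x, y]` into `n` pieces, multiplied through by `|y - x|`. -/
def SegmentSubadditive (F : E → E → ℝ) : Prop :=
  ∀ (x y : E) (n : ℕ), 1 ≤ n →
    F x y ≤ n * ∑ i : Fin n, F (x + ((i : ℝ) / n) • (y - x)) (x + (((i : ℝ) + 1) / n) • (y - x))

namespace SegmentSubadditive

variable {F G : E → E → ℝ}

theorem add (hF : SegmentSubadditive F) (hG : SegmentSubadditive G) :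
    SegmentSubadditive fun x y => F x y + G x y := fun x y n hn => by
  simpa only [Finset.sum_add_distrib, mul_add] using add_le_add (hF x y n hn) (hG x y n hn)

theorem const_mul (hF : SegmentSubadditive F) {c : ℝ} (hc : 0 ≤ c) :
    SegmentSubadditive fun x y => c * F x y := fun x y n hn => by
  simpa only [← Finset.mul_sum, mul_left_comm] using mul_le_mul_of_nonneg_left (hF x y n hn) hc

end SegmentSubadditive

end Partition

theorem segmentSubadditive_inner_sub {E : Type*} [NormedAddCommGroup E] [InnerProductSpace ℝ E]
    (b : E → E) : SegmentSubadditive fun x y => ⟪b y - b x, y - x⟫ := by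
  intro x y n hn
  refine le_of_eq ?_
  set g : ℕ → E := fun i => b (x + ((i : ℝ) / n) • (y - x))
  have hn0 : (n : ℝ) ≠ 0 := by positivity
  have hterm : ∀ i : Fin n,
      ⟪b (x + (((i : ℝ) + 1) / n) • (y - x)) - b (x + ((i : ℝ) / n) • (y - x)),
        x + (((i : ℝ) + 1) / n) • (y - x) - (x + ((i : ℝ) / n) • (y - x))⟫ =
      (n : ℝ)⁻¹ * ⟪g (i + 1) - g i, y - x⟫ := by
    intro i
    rw [add_succ_div_smul_sub_add_div_smul, real_inner_smul_right]
    push_cast [g]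
    rfl
  have htelescope : ∑ i : Fin n, (g (i + 1) - g i) = b y - b x := by
    rw [Fin.sum_univ_eq_sum_range (fun i => g (i + 1) - g i), Finset.sum_range_sub]
    simp [g, hn0]
  rw [Finset.sum_congr rfl fun i _ => hterm i, ← Finset.mul_sum, ← sum_inner, htelescope,
    mul_inv_cancel_left₀ hn0]

theorem SegmentSubadditive.le_of_locally_le {E : Type*} [NormedAddCommGroup E] [NormedSpace ℝ E]
    {F : E → E → ℝ} (hF : SegmentSubadditive F) {C : ℝ}
    (hloc : ∀ z, ∃ ε > 0, ∀ x y, ‖x - z‖ < ε → ‖y - z‖ < ε → F x y ≤ C * ‖y - x‖ ^ 2)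
    (x y : E) : F x y ≤ C * ‖y - x‖ ^ 2 := by
  have hcompact : IsCompact (segment ℝ x y) := by
    rw [segment_eq_image']
    exact isCompact_Icc.image (by fun_prop)
  obtain ⟨δ, hδ, hδloc⟩ := hcompact.exists_pos_forall_dist_lt
    (P := fun u v => F u v ≤ C * ‖v - u‖ ^ 2) (by simpa only [dist_eq_norm] using hloc)
  obtain ⟨n, hn⟩ := exists_nat_gt (‖y - x‖ / δ)
  have hn0 : (0 : ℝ) < n := lt_of_le_of_lt (by positivity) hn
  have hstep : ‖y - x‖ / n < δ := (div_lt_comm₀ hδ hn0).1 hn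
  have hpiece : ∀ i : Fin n, F (x + ((i : ℝ) / n) • (y - x)) (x + (((i : ℝ) + 1) / n) • (y - x)) ≤
      C * (‖y - x‖ / n) ^ 2 := by
    intro i
    have hlen : ‖(x + (((i : ℝ) + 1) / n) • (y - x)) - (x + ((i : ℝ) / n) • (y - x))‖ =
        ‖y - x‖ / n := by
      rw [add_succ_div_smul_sub_add_div_smul, norm_smul, norm_inv, Real.norm_natCast,
        inv_mul_eq_div]
    rw [← hlen]
    refine hδloc _ (add_div_smul_mem_segment x y i.is_lt.le) _ ?_
    rwa [dist_eq_norm, hlen]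
  calc F x y ≤ n * ∑ i : Fin n, F (x + ((i : ℝ) / n) • (y - x))
        (x + (((i : ℝ) + 1) / n) • (y - x)) := hF x y n (by exact_mod_cast hn0)
    _ ≤ n * ∑ _i : Fin n, C * (‖y - x‖ / n) ^ 2 := by gcongr with i; exact hpiece i
    _ = C * ‖y - x‖ ^ 2 := by
      rw [Finset.sum_const, Finset.card_univ, Fintype.card_fin, nsmul_eq_mul]
      field_simp

theorem onesided_local_implies_global_general {d : ℕ} (μ C : ℝ) (hμ : 0 ≤ μ)
    (b : EuclideanSpace ℝ (Fin d) → EuclideanSpace ℝ (Fin d))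
    (A : EuclideanSpace ℝ (Fin d) → EuclideanSpace ℝ (Fin d) → Matrix (Fin d) (Fin d) ℝ)
    -- segment-subadditivity for equidistant partitions:
    (hsubTr : ∀ (x y : EuclideanSpace ℝ (Fin d)) (n : ℕ), 1 ≤ n →
      Matrix.trace (A x y) ≤ (n : ℝ) *
        ∑ i : Fin n, Matrix.trace (A (x + ((i : ℝ) / n) • (y - x))
          (x + (((i : ℝ) + 1) / n) • (y - x))))
    (hsubNorm : ∀ (x y : EuclideanSpace ℝ (Fin d)) (n : ℕ), 1 ≤ n →
      matOpNorm (A x y) ≤ (n : ℝ) *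
        ∑ i : Fin n, matOpNorm (A (x + ((i : ℝ) / n) • (y - x))
          (x + (((i : ℝ) + 1) / n) • (y - x))))
    -- the one-sided bound with constant `C` holds locally:
    (hloc : ∀ z : EuclideanSpace ℝ (Fin d), ∃ ε > (0 : ℝ),
      ∀ x y : EuclideanSpace ℝ (Fin d), ‖x - z‖ < ε → ‖y - z‖ < ε →
        2 * ⟪b y - b x, y - x⟫ + Matrix.trace (A x y) + μ * matOpNorm (A x y) ≤
          C * ‖y - x‖ ^ 2) :
    ∀ x y : EuclideanSpace ℝ (Fin d),
      2 * ⟪b y - b x, y - x⟫ + Matrix.trace (A x y) + μ * matOpNorm (A x y) ≤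
        C * ‖y - x‖ ^ 2 := by
  have hsub : SegmentSubadditive fun x y : EuclideanSpace ℝ (Fin d) =>
      2 * ⟪b y - b x, y - x⟫ + Matrix.trace (A x y) + μ * matOpNorm (A x y) :=
    (((segmentSubadditive_inner_sub b).const_mul zero_le_two).add hsubTr).add
      (SegmentSubadditive.const_mul hsubNorm hμ)
  exact hsub.le_of_locally_le hloc

/-- if the one-sided (monotonicity) condition with constant `C` holds locally,
then under the segment-subadditivity of `tr A` and `‖A‖` it holds globally with the same
constant `C`. -/
theorem onesided_local_implies_global {d : ℕ} (μ C : ℝ) (hμ : 0 ≤ μ) (hC : 0 ≤ C)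
    (b : EuclideanSpace ℝ (Fin d) → EuclideanSpace ℝ (Fin d)) (hb : Continuous b)
    (A : EuclideanSpace ℝ (Fin d) → EuclideanSpace ℝ (Fin d) → Matrix (Fin d) (Fin d) ℝ)
    (hAsymm : ∀ x y, (A x y)ᵀ = A x y)
    (hApsd : ∀ x y (v : EuclideanSpace ℝ (Fin d)),
      0 ≤ ⟪Matrix.toEuclideanLin (A x y) v, v⟫)
    (hAdiag : ∀ x, A x x = 0)
    -- segment-subadditivity for equidistant partitions:
    (hsubTr : ∀ (x y : EuclideanSpace ℝ (Fin d)) (n : ℕ), 1 ≤ n →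
      Matrix.trace (A x y) ≤ (n : ℝ) *
        ∑ i : Fin n, Matrix.trace (A (x + ((i : ℝ) / n) • (y - x))
          (x + (((i : ℝ) + 1) / n) • (y - x))))
    (hsubNorm : ∀ (x y : EuclideanSpace ℝ (Fin d)) (n : ℕ), 1 ≤ n →
      matOpNorm (A x y) ≤ (n : ℝ) *
        ∑ i : Fin n, matOpNorm (A (x + ((i : ℝ) / n) • (y - x))
          (x + (((i : ℝ) + 1) / n) • (y - x))))
    -- the one-sided bound with constant `C` holds locally:
    (hloc : ∀ z : EuclideanSpace ℝ (Fin d), ∃ ε > (0 : ℝ),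
      ∀ x y : EuclideanSpace ℝ (Fin d), ‖x - z‖ < ε → ‖y - z‖ < ε →
        2 * ⟪b y - b x, y - x⟫ + Matrix.trace (A x y) + μ * matOpNorm (A x y) ≤
          C * ‖y - x‖ ^ 2) :
    ∀ x y : EuclideanSpace ℝ (Fin d),
      2 * ⟪b y - b x, y - x⟫ + Matrix.trace (A x y) + μ * matOpNorm (A x y) ≤
        C * ‖y - x‖ ^ 2 :=
  onesided_local_implies_global_general μ C hμ b A hsubTr hsubNorm hloc
end

section
/- (Semiflow property transfers from a.s. pointwise identities to everywhere identities under joint continuity.) Let φ: {(s,t,x): 0 ≤ s ≤ t, x ∈ ℝ^d} × Ω → ℝ^d be jointly continuous in (s,t,x) for every ω. Suppose that for each fixed (s,t,u,x) with s ≤ t ≤ u, the identity φ_{s,u}(x,ω) = φ_{t,u}(φ_{s,t}(x,ω), ω) holds for ω outside a null set N_{s,t,u,x}, and φ_{s,s}(x,ω) = x for ω outside a null set N_{s,x}. Then there is a single null set Ñ and a modification φ̃ (equal to φ off Ñ and to the trivial map (s,t,x) ↦ x on Ñ) such that φ̃_{s,u}(x,ω) = φ̃_{t,u}(φ̃_{s,t}(x,ω),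 ω) and φ̃_{s,s}(x,ω) = x hold for ALL s ≤ t ≤ u, x ∈ ℝ^d, and ω ∈ Ω. -/
/-!
Each identity holds almost surely at every fixed parameter. Testing it only on a countable
dense subset of the parameter domain costs a countable union of null sets, and off that single
null set both sides are continuous functions of the parameters that agree on a dense set, hence
everywhere. On the null set itself the trivial flow `(s, t, x) ↦ x` is substituted.
-/

open MeasureTheory Set Filter Topology TopologicalSpace

theorem ae_eqOn_of_forall_ae_eq {X Y Ω : Type*} [TopologicalSpace X] [PseudoMetrizableSpace X]
    [TopologicalSpace Y] [T2Space Y] {m : MeasurableSpace Ω} {μ : Measure Ω} {S : Set X} (hS : IsSeparable S) {f g : X → Ω → Y}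
    (hf : ∀ ω, ContinuousOn (f · ω) S) (hg : ∀ ω, ContinuousOn (g · ω) S)
    (h : ∀ x ∈ S, ∀ᵐ ω ∂μ, f x ω = g x ω) :
    ∀ᵐ ω ∂μ, EqOn (f · ω) (g · ω) S := by
  obtain ⟨D, hDS, hDc, hSD⟩ := hS.exists_countable_dense_subset
  have hD : ∀ᵐ ω ∂μ, ∀ x ∈ D, f x ω = g x ω :=
    (ae_ball_iff hDc).2 fun x hx => h x (hDS hx)
  filter_upwards [hD] with ω hω
  exact EqOn.of_subset_closure hω (hf ω) (hg ω) hDS hSD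

theorem exists_measurableSet_modification_of_ae {Ω α : Type*} {m : MeasurableSpace Ω}
    {μ : Measure Ω} {P : α → Prop} {f : Ω → α} {a : α} (ha : P a) (h : ∀ᵐ ω ∂μ, P (f ω)) :
    ∃ N : Set Ω, MeasurableSet N ∧ μ N = 0 ∧ ∃ f' : Ω → α,
      (∀ ω ∉ N, f' ω = f ω) ∧ (∀ ω ∈ N, f' ω = a) ∧ ∀ ω, P (f' ω) := by
  classical
  set N := toMeasurable μ {ω | ¬P (f ω)}
  refine ⟨N, measurableSet_toMeasurable _ _, by rwa [measure_toMeasurable, ← ae_iff],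
    fun ω => if ω ∈ N then a else f ω, fun ω hω => if_neg hω, fun ω hω => if_pos hω,
    fun ω => ?_⟩
  dsimp only
  split_ifs with hω
  · exact ha
  · exact not_not.1 fun hP => hω (subset_toMeasurable _ _ hP)

structure IsSemiflow {E : Type*} (ψ : ℝ → ℝ → E → E) : Prop where
  comp : ∀ s t u x, 0 ≤ s → s ≤ t → t ≤ u → ψ s u x = ψ t u (ψ s t x)
  apply_self : ∀ s x, 0 ≤ s → ψ s s x = x

theorem isSemiflow_trivial {E : Type*} : IsSemiflow fun _ _ (x : E) => x :=
  ⟨fun _ _ _ _ _ _ _ => rfl, fun _ _ _ => rfl⟩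

theorem ContinuousOn.comp_flow_params {E Z : Type*} [TopologicalSpace E] [TopologicalSpace Z]
    {φ : ℝ → ℝ → E → E} {S : Set Z}
    (hφ : ContinuousOn (fun p : ℝ × ℝ × E => φ p.1 p.2.1 p.2.2) {p | 0 ≤ p.1 ∧ p.1 ≤ p.2.1})
    {s t : Z → ℝ} {x : Z → E} (hs : Continuous s) (ht : Continuous t) (hx : ContinuousOn x S)
    (hst : ∀ z ∈ S, 0 ≤ s z ∧ s z ≤ t z) :
    ContinuousOn (fun z => φ (s z) (t z) (x z)) S :=
  hφ.comp (hs.continuousOn.prodMk (ht.continuousOn.prodMk hx)) hst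

theorem ae_isSemiflow_of_continuousOn {E Ω : Type*} [MetricSpace E] [SeparableSpace E]
    {m : MeasurableSpace Ω} {μ : Measure Ω} {φ : ℝ → ℝ → E → Ω → E}
    (hcont : ∀ ω, ContinuousOn (fun p : ℝ × ℝ × E => φ p.1 p.2.1 p.2.2 ω)
      {p | 0 ≤ p.1 ∧ p.1 ≤ p.2.1})
    (hcomp : ∀ s t u x, 0 ≤ s → s ≤ t → t ≤ u → ∀ᵐ ω ∂μ, φ s u x ω = φ t u (φ s t x ω) ω)
    (hid : ∀ s x, 0 ≤ s → ∀ᵐ ω ∂μ, φ s s x ω = x) :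
    ∀ᵐ ω ∂μ, IsSemiflow fun s t x => φ s t x ω := by
  have hcomp_on : ∀ᵐ ω ∂μ, EqOn (fun p : ℝ × ℝ × ℝ × E => φ p.1 p.2.2.1 p.2.2.2 ω)
      (fun p => φ p.2.1 p.2.2.1 (φ p.1 p.2.1 p.2.2.2 ω) ω)
      {p | 0 ≤ p.1 ∧ p.1 ≤ p.2.1 ∧ p.2.1 ≤ p.2.2.1} := by
    refine ae_eqOn_of_forall_ae_eq (IsSeparable.of_separableSpace _) (fun ω => ?_)
      (fun ω => ?_) fun p hp => hcomp _ _ _ _ hp.1 hp.2.1 hp.2.2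
    · exact (hcont ω).comp_flow_params (φ := (φ · · · ω)) continuous_fst
        continuous_snd.snd.fst continuous_snd.snd.snd.continuousOn
        fun p hp => ⟨hp.1, hp.2.1.trans hp.2.2⟩
    · have hinner : ContinuousOn (fun p : ℝ × ℝ × ℝ × E => φ p.1 p.2.1 p.2.2.2 ω)
          {p | 0 ≤ p.1 ∧ p.1 ≤ p.2.1 ∧ p.2.1 ≤ p.2.2.1} :=
        (hcont ω).comp_flow_params (φ := (φ · · · ω)) continuous_fst continuous_snd.fst
          continuous_snd.snd.snd.continuousOn fun p hp => ⟨hp.1, hp.2.1⟩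
      exact (hcont ω).comp_flow_params (φ := (φ · · · ω)) continuous_snd.fst
        continuous_snd.snd.fst hinner fun p hp => ⟨hp.1.trans hp.2.1, hp.2.2⟩
  have hid_on : ∀ᵐ ω ∂μ, EqOn (fun p : ℝ × E => φ p.1 p.1 p.2 ω) Prod.snd {p | 0 ≤ p.1} :=
    ae_eqOn_of_forall_ae_eq (IsSeparable.of_separableSpace _)
      (fun ω => (hcont ω).comp_flow_params (φ := (φ · · · ω)) continuous_fst continuous_fst
        continuous_snd.continuousOn fun p hp => ⟨hp, le_rfl⟩)
      (fun _ => continuousOn_snd) fun p hp => hid _ _ hp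
  filter_upwards [hcomp_on, hid_on] with ω hω_comp hω_id
  exact ⟨fun s t u x hs hst htu => @hω_comp (s, t, u, x) ⟨hs, hst, htu⟩,
    fun s x hs => @hω_id (s, x) hs⟩

theorem semiflow_modification_general {d : ℕ} {Ω : Type*} {m0 : MeasurableSpace Ω}
    (μ : Measure Ω)
    (φ : ℝ → ℝ → EuclideanSpace ℝ (Fin d) → Ω → EuclideanSpace ℝ (Fin d))
    (hcont : ∀ ω, ContinuousOn
      (fun p : ℝ × ℝ × EuclideanSpace ℝ (Fin d) => φ p.1 p.2.1 p.2.2 ω)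
      {p : ℝ × ℝ × EuclideanSpace ℝ (Fin d) | 0 ≤ p.1 ∧ p.1 ≤ p.2.1})
    (hcomp : ∀ (s t u : ℝ) (x : EuclideanSpace ℝ (Fin d)), 0 ≤ s → s ≤ t → t ≤ u →
      ∀ᵐ ω ∂μ, φ s u x ω = φ t u (φ s t x ω) ω)
    (hid : ∀ (s : ℝ) (x : EuclideanSpace ℝ (Fin d)), 0 ≤ s →
      ∀ᵐ ω ∂μ, φ s s x ω = x) :
    ∃ N : Set Ω, MeasurableSet N ∧ μ N = 0 ∧
      ∃ φ' : ℝ → ℝ → EuclideanSpace ℝ (Fin d) → Ω → EuclideanSpace ℝ (Fin d),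
        (∀ ω ∉ N, ∀ s t x, φ' s t x ω = φ s t x ω) ∧
        (∀ ω ∈ N, ∀ s t x, φ' s t x ω = x) ∧
        (∀ ω, ∀ (s t u : ℝ) (x : EuclideanSpace ℝ (Fin d)), 0 ≤ s → s ≤ t → t ≤ u →
          φ' s u x ω = φ' t u (φ' s t x ω) ω) ∧
        (∀ ω, ∀ (s : ℝ) (x : EuclideanSpace ℝ (Fin d)), 0 ≤ s → φ' s s x ω = x) := by
  obtain ⟨N, hN, hμN, ψ, hψ_off, hψ_on, hψ⟩ :=
    exists_measurableSet_modification_of_ae isSemiflow_trivial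
      (ae_isSemiflow_of_continuousOn (μ := μ) hcont hcomp hid)
  exact ⟨N, hN, hμN, fun s t x ω => ψ ω s t x,
    fun ω hω s t x => congrFun₃ (hψ_off ω hω) s t x,
    fun ω hω s t x => congrFun₃ (hψ_on ω hω) s t x,
    fun ω => (hψ ω).comp, fun ω => (hψ ω).apply_self⟩

/-- a.s.-pointwise flow identities upgrade to everywhere identities under
joint continuity: there is a single null set `Ñ` and a modification `φ̃` (equal to `φ` off
`Ñ` and trivial on `Ñ`) satisfying the semiflow identities for ALL parameters and `ω`. -/
theorem semiflow_modification {d : ℕ} {Ω : Type*} {m0 : MeasurableSpace Ω}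
    (μ : Measure Ω) [IsProbabilityMeasure μ]
    (φ : ℝ → ℝ → EuclideanSpace ℝ (Fin d) → Ω → EuclideanSpace ℝ (Fin d))
    (hcont : ∀ ω, ContinuousOn
      (fun p : ℝ × ℝ × EuclideanSpace ℝ (Fin d) => φ p.1 p.2.1 p.2.2 ω)
      {p : ℝ × ℝ × EuclideanSpace ℝ (Fin d) | 0 ≤ p.1 ∧ p.1 ≤ p.2.1})
    (hcomp : ∀ (s t u : ℝ) (x : EuclideanSpace ℝ (Fin d)), 0 ≤ s → s ≤ t → t ≤ u →
      ∀ᵐ ω ∂μ, φ s u x ω = φ t u (φ s t x ω) ω)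
    (hid : ∀ (s : ℝ) (x : EuclideanSpace ℝ (Fin d)), 0 ≤ s →
      ∀ᵐ ω ∂μ, φ s s x ω = x) :
    ∃ N : Set Ω, MeasurableSet N ∧ μ N = 0 ∧
      ∃ φ' : ℝ → ℝ → EuclideanSpace ℝ (Fin d) → Ω → EuclideanSpace ℝ (Fin d),
        (∀ ω ∉ N, ∀ s t x, φ' s t x ω = φ s t x ω) ∧
        (∀ ω ∈ N, ∀ s t x, φ' s t x ω = x) ∧
        (∀ ω, ∀ (s t u : ℝ) (x : EuclideanSpace ℝ (Fin d)), 0 ≤ s → s ≤ t → t ≤ u →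
          φ' s u x ω = φ' t u (φ' s t x ω) ω) ∧
        (∀ ω, ∀ (s : ℝ) (x : EuclideanSpace ℝ (Fin d)), 0 ≤ s → φ' s s x ω = x) :=
  semiflow_modification_general (m0 := m0) μ φ hcont hcomp hid
end
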